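/- arXiv:math/0505192 — 13 statements merged into one kernel-verified Lean document; each statement's English description precedes it below -/
import Mathlib

section
/- For all positive reals a, b, the Heron mean N3(a,b) = (a+√(ab)+b)/3 is at most N2(a,b) = ((√a+√b)/2)·√((a+b)/2). -/
theorem n3_le_n2 (a b : ℝ) (ha : 0 < a) (hb : 0 < b) :
    (a + Real.sqrt (a * b) + b) / 3 ≤
      ((Real.sqrt a + Real.sqrt b) / 2) * Real.sqrt ((a + b) / 2) := by
  set x := Real.sqrt a with hx
  set y := Real.sqrt b with hy
  have hx0 : 0 < x := Real.sqrt_pos.2 ha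
  have hy0 : 0 < y := Real.sqrt_pos.2 hb
  have hxa : x ^ 2 = a := Real.sq_sqrt ha.le
  have hyb : y ^ 2 = b := Real.sq_sqrt hb.le
  have hab : Real.sqrt (a * b) = x * y := by
    rw [hx, hy, ← Real.sqrt_mul ha.le]
  have hs : Real.sqrt ((a + b) / 2) ^ 2 = (a + b) / 2 :=
    Real.sq_sqrt (by positivity)
  have hs0 : 0 ≤ Real.sqrt ((a + b) / 2) := Real.sqrt_nonneg _
  have hL0 : 0 ≤ (a + Real.sqrt (a * b) + b) / 3 := by
    rw [hab]; positivity
  have hR0 : 0 ≤ ((x + y) / 2) * Real.sqrt ((a + b) / 2) := by positivity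
  have hsq : ((a + Real.sqrt (a * b) + b) / 3) ^ 2 ≤
      (((x + y) / 2) * Real.sqrt ((a + b) / 2)) ^ 2 := by
    rw [hab, mul_pow, hs, ← hxa, ← hyb]
    nlinarith [sq_nonneg (x - y), sq_nonneg (x + y), sq_nonneg (x * y),
      mul_pos hx0 hy0, sq_nonneg ((x - y) * (x + y)), sq_nonneg (x ^ 2 - y ^ 2),
      mul_nonneg (sq_nonneg (x - y)) (sq_nonneg (x + y))]
  exact (pow_le_pow_iff_left₀ hL0 hR0 two_ne_zero).mp hsq
end

section
/- For all positive reals a, b with a ≠ b, the inequality (√a+√b)/2 ≤ 2(b^{3/2} − a^{3/2})/(3(b−a)) ≤ √((a+b)/2) holds. -/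
lemma rpow_three_halves (x : ℝ) (hx : 0 ≤ x) : x ^ ((3:ℝ)/2) = Real.sqrt x ^ 3 := by
  rw [Real.sqrt_eq_rpow, ← Real.rpow_natCast (x ^ ((1:ℝ)/2)) 3, ← Real.rpow_mul hx]
  norm_num

lemma dp_aux (a b : ℝ) (ha : 0 < a) (hb : 0 < b) (hlt : a < b) :
    (Real.sqrt a + Real.sqrt b) / 2 ≤ 2 * (b ^ ((3:ℝ)/2) - a ^ ((3:ℝ)/2)) / (3 * (b - a)) ∧
    2 * (b ^ ((3:ℝ)/2) - a ^ ((3:ℝ)/2)) / (3 * (b - a)) ≤ Real.sqrt ((a + b) / 2) := by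
  set s := Real.sqrt a with hs
  set t := Real.sqrt b with ht
  have hs0 : 0 < s := Real.sqrt_pos.2 ha
  have ht0 : 0 < t := Real.sqrt_pos.2 hb
  have hst : s < t := Real.sqrt_lt_sqrt ha.le hlt
  have ha2 : a = s ^ 2 := (Real.sq_sqrt ha.le).symm
  have hb2 : b = t ^ 2 := (Real.sq_sqrt hb.le).symm
  have h3a : a ^ ((3:ℝ)/2) = s ^ 3 := rpow_three_halves a ha.le
  have h3b : b ^ ((3:ℝ)/2) = t ^ 3 := rpow_three_halves b hb.le
  have hden : 0 < 3 * (b - a) := by nlinarith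
  constructor
  · rw [h3a, h3b, div_le_div_iff₀ (by norm_num) hden, ha2, hb2]
    nlinarith [mul_nonneg (sq_nonneg (t - s)) (sub_pos.2 hst).le]
  · have hM0 : 0 ≤ 2 * (b ^ ((3:ℝ)/2) - a ^ ((3:ℝ)/2)) / (3 * (b - a)) := by
      apply div_nonneg _ hden.le
      rw [h3a, h3b]; nlinarith
    rw [show Real.sqrt ((a + b) / 2) = Real.sqrt ((a + b) / 2) from rfl,
      ← Real.sqrt_sq hM0]
    apply Real.sqrt_le_sqrt
    rw [div_pow, div_le_div_iff₀ (by positivity) (by norm_num), h3a, h3b, ha2, hb2]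
    nlinarith [mul_nonneg (mul_nonneg (sq_nonneg (t - s)) (sq_nonneg (t - s)))
      (by positivity : (0:ℝ) ≤ s ^ 2 + 4 * s * t + t ^ 2)]

theorem dragomir_pearce (a b : ℝ) (ha : 0 < a) (hb : 0 < b) (hab : a ≠ b) :
    (Real.sqrt a + Real.sqrt b) / 2 ≤ 2 * (b ^ ((3:ℝ)/2) - a ^ ((3:ℝ)/2)) / (3 * (b - a)) ∧
    2 * (b ^ ((3:ℝ)/2) - a ^ ((3:ℝ)/2)) / (3 * (b - a)) ≤ Real.sqrt ((a + b) / 2) := by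
  rcases hab.lt_or_gt with h | h
  · exact dp_aux a b ha hb h
  · have := dp_aux b a hb ha h
    have heq : 2 * (a ^ ((3:ℝ)/2) - b ^ ((3:ℝ)/2)) / (3 * (a - b)) =
        2 * (b ^ ((3:ℝ)/2) - a ^ ((3:ℝ)/2)) / (3 * (b - a)) := by
      rw [show 2 * (a ^ ((3:ℝ)/2) - b ^ ((3:ℝ)/2)) = -(2 * (b ^ ((3:ℝ)/2) - a ^ ((3:ℝ)/2))) by ring,
        show 3 * (a - b) = -(3 * (b - a)) by ring, neg_div_neg_eq]
    rw [heq] at this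
    constructor
    · calc (Real.sqrt a + Real.sqrt b) / 2 = (Real.sqrt b + Real.sqrt a) / 2 := by ring
        _ ≤ _ := this.1
    · calc _ ≤ Real.sqrt ((b + a) / 2) := this.2
        _ = Real.sqrt ((a + b) / 2) := by rw [add_comm]
end

section
/- Let f₁, f₂ : (0,∞) → ℝ be twice differentiable with f₁(1)=f₁'(1)=0, f₂(1)=f₂'(1)=0, f₂''(x) > 0 for all x > 0, and suppose α ≤ f₁''(x)/f₂''(x) ≤ β for all x > 0 with 0 ≤ α < β. Then for all a, b > 0: α·a·f₂(b/a) ≤ a·f₁(b/a) ≤ β·a·f₂(b/a). -/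
open Set

lemma ConvexOn.isMinOn_of_hasDerivAt_eq_zero {S : Set ℝ} {f : ℝ → ℝ} {c : ℝ}
    (hf : ConvexOn ℝ S f) (hc : c ∈ interior S) (hd : HasDerivAt f 0 c) : IsMinOn f S c :=
  hf.isMinOn_of_rightDeriv_eq_zero hc (hd.hasDerivWithinAt.derivWithin (uniqueDiffWithinAt_Ioi c))

/-- `g - f` is convex with a critical point at `c`, hence minimal there. -/
lemma le_of_tangent_of_hasDerivAt2_le {U : Set ℝ} (hU : IsOpen U) (hUc : Convex ℝ U)
    {f f' f'' g g' g'' : ℝ → ℝ}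
    (hf : ∀ x ∈ U, HasDerivAt f (f' x) x) (hf' : ∀ x ∈ U, HasDerivAt f' (f'' x) x)
    (hg : ∀ x ∈ U, HasDerivAt g (g' x) x) (hg' : ∀ x ∈ U, HasDerivAt g' (g'' x) x)
    {c : ℝ} (hc : c ∈ U) (h₀ : f c = g c) (h₁ : f' c = g' c)
    (hle : ∀ x ∈ U, f'' x ≤ g'' x) {x : ℝ} (hx : x ∈ U) : f x ≤ g x := by
  have hconv : ConvexOn ℝ U (g - f) := by
    refine convexOn_of_hasDerivWithinAt2_nonneg hUc (f' := g' - f') (f'' := g'' - f'')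
      (fun y hy => ((hg y hy).sub (hf y hy)).continuousAt.continuousWithinAt) ?_ ?_ ?_
      <;> rw [hU.interior_eq]
    · exact fun y hy => ((hg y hy).sub (hf y hy)).hasDerivWithinAt
    · exact fun y hy => ((hg' y hy).sub (hf' y hy)).hasDerivWithinAt
    · exact fun y hy => sub_nonneg.2 (hle y hy)
  have hcrit : HasDerivAt (g - f) 0 c := by
    simpa [h₁] using (hg c hc).sub (hf c hc)
  have hmin := hconv.isMinOn_of_hasDerivAt_eq_zero (by rwa [hU.interior_eq]) hcrit hx
  simp only [Pi.sub_apply, h₀, sub_self] at hmin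
  exact sub_nonneg.1 hmin

theorem phi_ratio_bounds_general (f₁ f₂ : ℝ → ℝ) (α β : ℝ)
    (hd₁ : ∀ x ∈ Set.Ioi (0:ℝ), DifferentiableAt ℝ f₁ x)
    (hd₁' : ∀ x ∈ Set.Ioi (0:ℝ), DifferentiableAt ℝ (deriv f₁) x)
    (hd₂ : ∀ x ∈ Set.Ioi (0:ℝ), DifferentiableAt ℝ f₂ x)
    (hd₂' : ∀ x ∈ Set.Ioi (0:ℝ), DifferentiableAt ℝ (deriv f₂) x)
    (hf₁1 : f₁ 1 = 0) (hf₁1' : deriv f₁ 1 = 0)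
    (hf₂1 : f₂ 1 = 0) (hf₂1' : deriv f₂ 1 = 0)
    (hf₂'' : ∀ x ∈ Set.Ioi (0:ℝ), 0 < deriv (deriv f₂) x)
    (hratio : ∀ x ∈ Set.Ioi (0:ℝ),
      α ≤ deriv (deriv f₁) x / deriv (deriv f₂) x ∧
      deriv (deriv f₁) x / deriv (deriv f₂) x ≤ β)
    (a b : ℝ) (ha : 0 < a) (hb : 0 < b) :
    α * (a * f₂ (b / a)) ≤ a * f₁ (b / a) ∧ a * f₁ (b / a) ≤ β * (a * f₂ (b / a)) := by
  have hx : b / a ∈ Ioi (0:ℝ) := div_pos hb ha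
  have h1 : (1:ℝ) ∈ Ioi 0 := mem_Ioi.2 one_pos
  have H₁ := fun x hx => (hd₁ x hx).hasDerivAt
  have H₁' := fun x hx => (hd₁' x hx).hasDerivAt
  have H₂ (c : ℝ) := fun x hx => ((hd₂ x hx).hasDerivAt).const_mul c
  have H₂' (c : ℝ) := fun x hx => ((hd₂' x hx).hasDerivAt).const_mul c
  have hlow : α * f₂ (b / a) ≤ f₁ (b / a) :=
    le_of_tangent_of_hasDerivAt2_le isOpen_Ioi (convex_Ioi 0) (H₂ α) (H₂' α) H₁ H₁' h1
      (by simp [hf₁1, hf₂1]) (by simp [hf₁1', hf₂1'])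
      (fun x hx => (le_div_iff₀ (hf₂'' x hx)).1 (hratio x hx).1) hx
  have hupp : f₁ (b / a) ≤ β * f₂ (b / a) :=
    le_of_tangent_of_hasDerivAt2_le isOpen_Ioi (convex_Ioi 0) H₁ H₁' (H₂ β) (H₂' β) h1
      (by simp [hf₁1, hf₂1]) (by simp [hf₁1', hf₂1'])
      (fun x hx => (div_le_iff₀ (hf₂'' x hx)).1 (hratio x hx).2) hx
  rw [mul_left_comm, mul_left_comm β]
  exact ⟨mul_le_mul_of_nonneg_left hlow ha.le, mul_le_mul_of_nonneg_left hupp ha.le⟩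

theorem phi_ratio_bounds (f₁ f₂ : ℝ → ℝ) (α β : ℝ)
    (hd₁ : ∀ x ∈ Set.Ioi (0:ℝ), DifferentiableAt ℝ f₁ x)
    (hd₁' : ∀ x ∈ Set.Ioi (0:ℝ), DifferentiableAt ℝ (deriv f₁) x)
    (hd₂ : ∀ x ∈ Set.Ioi (0:ℝ), DifferentiableAt ℝ f₂ x)
    (hd₂' : ∀ x ∈ Set.Ioi (0:ℝ), DifferentiableAt ℝ (deriv f₂) x)
    (hf₁1 : f₁ 1 = 0) (hf₁1' : deriv f₁ 1 = 0)
    (hf₂1 : f₂ 1 = 0) (hf₂1' : deriv f₂ 1 = 0)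
    (hf₂'' : ∀ x ∈ Set.Ioi (0:ℝ), 0 < deriv (deriv f₂) x)
    (hα : 0 ≤ α) (hαβ : α < β)
    (hratio : ∀ x ∈ Set.Ioi (0:ℝ),
      α ≤ deriv (deriv f₁) x / deriv (deriv f₂) x ∧
      deriv (deriv f₁) x / deriv (deriv f₂) x ≤ β)
    (a b : ℝ) (ha : 0 < a) (hb : 0 < b) :
    α * (a * f₂ (b / a)) ≤ a * f₁ (b / a) ∧ a * f₁ (b / a) ≤ β * (a * f₂ (b / a)) :=
  phi_ratio_bounds_general f₁ f₂ α β hd₁ hd₁' hd₂ hd₂' hf₁1 hf₁1' hf₂1 hf₂1' hf₂'' hratio a b ha hb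
end

section
/- For all positive reals a, b: S(a,b) − A(a,b) ≤ (1/3)(S(a,b) − H(a,b)), where S(a,b) = √((a²+b²)/2), A(a,b) = (a+b)/2, H(a,b) = 2ab/(a+b). -/
theorem msa_le_msh (a b : ℝ) (ha : 0 < a) (hb : 0 < b) :
    Real.sqrt ((a ^ 2 + b ^ 2) / 2) - (a + b) / 2 ≤
      (1/3) * (Real.sqrt ((a ^ 2 + b ^ 2) / 2) - 2 * a * b / (a + b)) := by
  have hab : 0 < a + b := by linarith
  have key : Real.sqrt ((a ^ 2 + b ^ 2) / 2) ≤
      (3 * (a + b) / 2 - 2 * a * b / (a + b)) / 2 := by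
    rw [show (3 * (a + b) / 2 - 2 * a * b / (a + b)) / 2
        = (3 * (a + b) ^ 2 - 4 * a * b) / (4 * (a + b)) by field_simp; ring]
    rw [Real.sqrt_le_iff]
    constructor
    · apply div_nonneg <;> nlinarith [sq_nonneg (a - b)]
    · rw [div_pow, le_div_iff₀ (by positivity)]
      nlinarith [sq_nonneg ((a + b) ^ 2 - 4 * a * b), sq_nonneg (a - b), sq_nonneg (a + b)]
  linarith
end

section
/- For all positive reals a, b: S(a,b) − H(a,b) ≤ (3/2)(A(a,b) − H(a,b)), equivalently 2S(a,b) + H(a,b) ≤ 3A(a,b). -/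
/-!
Write `A`, `H` for the arithmetic and harmonic means. Since `A - H = (a - b)² / (2 (a + b))`,
one has `((3A - H) / 2)² = (a² + b²) / 2 + ((A - H) / 2)²`, hence `S ≤ (3A - H) / 2`.
-/

theorem two_mul_mul_div_add_le_add_div_two {a b : ℝ} (hab : 0 < a + b) :
    2 * a * b / (a + b) ≤ (a + b) / 2 := by
  rw [div_le_div_iff₀ hab two_pos]
  nlinarith [sq_nonneg (a - b)]

theorem sq_three_mul_arith_sub_harm_div_two {a b : ℝ} (hab : a + b ≠ 0) :
    ((3 * ((a + b) / 2) - 2 * a * b / (a + b)) / 2) ^ 2 =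
      (a ^ 2 + b ^ 2) / 2 + (((a + b) / 2 - 2 * a * b / (a + b)) / 2) ^ 2 := by
  field_simp
  ring

theorem msh_le_mah (a b : ℝ) (ha : 0 < a) (hb : 0 < b) :
    Real.sqrt ((a ^ 2 + b ^ 2) / 2) - 2 * a * b / (a + b) ≤
      (3/2) * ((a + b) / 2 - 2 * a * b / (a + b)) := by
  have hab : 0 < a + b := add_pos ha hb
  have harm_le_arith := two_mul_mul_div_add_le_add_div_two hab
  have quad_le : Real.sqrt ((a ^ 2 + b ^ 2) / 2) ≤
      (3 * ((a + b) / 2) - 2 * a * b / (a + b)) / 2 := by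
    refine Real.sqrt_le_iff.2 ⟨by linarith, ?_⟩
    rw [sq_three_mul_arith_sub_harm_div_two hab.ne']
    exact le_add_of_nonneg_right (sq_nonneg _)
  linarith
end

section
/- For all positive reals a, b: A(a,b) − H(a,b) ≤ S(a,b) − G(a,b), equivalently A(a,b) + G(a,b) ≤ S(a,b) + H(a,b). -/
theorem mah_le_msg (a b : ℝ) (ha : 0 < a) (hb : 0 < b) :
    (a + b) / 2 - 2 * a * b / (a + b) ≤
      Real.sqrt ((a ^ 2 + b ^ 2) / 2) - Real.sqrt (a * b) := by
  set s := Real.sqrt ((a ^ 2 + b ^ 2) / 2) with hs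
  set g := Real.sqrt (a * b) with hg
  have hab : 0 < a + b := by linarith
  have hs2 : s ^ 2 = (a ^ 2 + b ^ 2) / 2 := Real.sq_sqrt (by positivity)
  have hg2 : g ^ 2 = a * b := Real.sq_sqrt (by positivity)
  have hsnn : 0 ≤ s := Real.sqrt_nonneg _
  have hgpos : 0 < g := Real.sqrt_pos.mpr (by positivity)
  have hsg : 0 < s + g := by linarith
  have hle : s + g ≤ a + b := by
    nlinarith [sq_nonneg (s - g), sq_nonneg (s + g - (a + b)), sq_nonneg (a - b)]
  have h1 : (a + b) / 2 - 2 * a * b / (a + b) = (a - b) ^ 2 / 2 / (a + b) := by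
    field_simp
    ring
  have h2 : s - g = (a - b) ^ 2 / 2 / (s + g) := by
    rw [eq_div_iff hsg.ne']
    nlinarith [hs2, hg2]
  rw [h1, h2]
  gcongr
end

section
/- For all positive reals a, b, the chain H ≤ G ≤ (2H+S)/3 ≤ (A+H)/2 ≤ (S+G)/2 ≤ (H+2S)/3 ≤ A ≤ S+H−G ≤ S ≤ 3(A−G)+H holds, where all means are evaluated at (a,b). -/
set_option maxHeartbeats 1000000 in

theorem refined_chain (a b : ℝ) (ha : 0 < a) (hb : 0 < b) :
    2 * a * b / (a + b) ≤ Real.sqrt (a * b) ∧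
    Real.sqrt (a * b) ≤ (2 * (2 * a * b / (a + b)) + Real.sqrt ((a ^ 2 + b ^ 2) / 2)) / 3 ∧
    (2 * (2 * a * b / (a + b)) + Real.sqrt ((a ^ 2 + b ^ 2) / 2)) / 3 ≤
      ((a + b) / 2 + 2 * a * b / (a + b)) / 2 ∧
    ((a + b) / 2 + 2 * a * b / (a + b)) / 2 ≤
      (Real.sqrt ((a ^ 2 + b ^ 2) / 2) + Real.sqrt (a * b)) / 2 ∧
    (Real.sqrt ((a ^ 2 + b ^ 2) / 2) + Real.sqrt (a * b)) / 2 ≤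
      (2 * a * b / (a + b) + 2 * Real.sqrt ((a ^ 2 + b ^ 2) / 2)) / 3 ∧
    (2 * a * b / (a + b) + 2 * Real.sqrt ((a ^ 2 + b ^ 2) / 2)) / 3 ≤ (a + b) / 2 ∧
    (a + b) / 2 ≤ Real.sqrt ((a ^ 2 + b ^ 2) / 2) + 2 * a * b / (a + b) - Real.sqrt (a * b) ∧
    Real.sqrt ((a ^ 2 + b ^ 2) / 2) + 2 * a * b / (a + b) - Real.sqrt (a * b) ≤
      Real.sqrt ((a ^ 2 + b ^ 2) / 2) ∧
    Real.sqrt ((a ^ 2 + b ^ 2) / 2) ≤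
      3 * ((a + b) / 2 - Real.sqrt (a * b)) + 2 * a * b / (a + b) := by
  set t := a + b with htdef
  have ht : 0 < t := by positivity
  set g := Real.sqrt (a * b) with hgdef
  set s := Real.sqrt ((a ^ 2 + b ^ 2) / 2) with hsdef
  set H := 2 * a * b / t with hHdef
  have hg0 : 0 < g := Real.sqrt_pos.2 (by positivity)
  have hs0 : 0 < s := Real.sqrt_pos.2 (by positivity)
  have hg2 : g ^ 2 = a * b := Real.sq_sqrt (by positivity)
  have hs2 : s ^ 2 = (a ^ 2 + b ^ 2) / 2 := Real.sq_sqrt (by positivity)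
  have htt : t ^ 2 = 2 * s ^ 2 + 2 * g ^ 2 := by rw [hg2, hs2, htdef]; ring
  have hgs : g ≤ s := Real.sqrt_le_sqrt (by nlinarith [sq_nonneg (a - b)])
  have htsg : s + g ≤ t := by
    nlinarith [sq_nonneg (s - g), mul_pos hs0 hg0]
  have hH : t * H = 2 * g ^ 2 := by
    rw [hHdef, hg2, mul_div_cancel₀ _ ht.ne']
    ring
  have hH0 : 0 < H := div_pos (by positivity) ht
  -- key2 : 3*g*t ≤ 4*g^2 + s*t
  have key2 : 3 * g * t ≤ 4 * g ^ 2 + s * t := by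
    have h0 : (s ^ 2 - 9 * g ^ 2) * (t ^ 2 - 2 * s ^ 2 - 2 * g ^ 2) = 0 := by
      rw [htt]; ring
    have hA : 0 ≤ (s - g) ^ 2 * (s ^ 2 + 2 * g * s - g ^ 2) := by
      apply mul_nonneg (sq_nonneg _)
      nlinarith [mul_pos hg0 hs0, hgs]
    have hB : 0 ≤ g * g * (s * (t - (s + g))) :=
      mul_nonneg (mul_nonneg hg0.le hg0.le)
        (mul_nonneg hs0.le (by linarith))
    have hsq : (3 * g * t) ^ 2 ≤ (4 * g ^ 2 + s * t) ^ 2 := by linarith [h0, hA, hB]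
    exact (pow_le_pow_iff_left₀ (by positivity) (by positivity) two_ne_zero).1 hsq
  -- key36 : 4*g^2 + 4*s*t ≤ 3*t^2
  have key36 : 4 * g ^ 2 + 4 * s * t ≤ 3 * t ^ 2 := by
    have h0 : (-4 * s ^ 2) * (t ^ 2 - 2 * s ^ 2 - 2 * g ^ 2) = 0 := by rw [htt]; ring
    have hA : 0 ≤ (s ^ 2 - g ^ 2) ^ 2 := sq_nonneg _
    have hsq : (2 * s * t) ^ 2 ≤ (3 * s ^ 2 + g ^ 2) ^ 2 := by linarith [h0, hA]
    have h1 : 2 * s * t ≤ 3 * s ^ 2 + g ^ 2 :=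
      (pow_le_pow_iff_left₀ (by positivity) (by positivity) two_ne_zero).1 hsq
    nlinarith [htt]
  -- key47 : s^2 + 3*g^2 ≤ s*t + g*t
  have key47 : s ^ 2 + 3 * g ^ 2 ≤ s * t + g * t := by
    nlinarith [mul_nonneg (sub_nonneg.2 htsg) (by positivity : (0:ℝ) ≤ s + g),
      mul_nonneg (sub_nonneg.2 hgs) hg0.le]
  -- key7 : s^2 - g^2 ≤ t*(s-g)
  have key7 : s ^ 2 - g ^ 2 ≤ t * (s - g) := by
    nlinarith [mul_nonneg (sub_nonneg.2 htsg) (sub_nonneg.2 hgs)]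
  -- key9 : s*t + 3*g*t ≤ 3*s^2 + 5*g^2
  have key9 : s * t + 3 * g * t ≤ 3 * s ^ 2 + 5 * g ^ 2 := by
    have h0 : (-(s + 3 * g) ^ 2) * (t ^ 2 - 2 * s ^ 2 - 2 * g ^ 2) = 0 := by rw [htt]; ring
    have hA : 0 ≤ (s - g) ^ 2 * (7 * s ^ 2 + 2 * s * g + 7 * g ^ 2) := by positivity
    have hsq : (s * t + 3 * g * t) ^ 2 ≤ (3 * s ^ 2 + 5 * g ^ 2) ^ 2 := by
      linarith [h0, hA]
    exact (pow_le_pow_iff_left₀ (by positivity) (by positivity) two_ne_zero).1 hsq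
  have h2g : 2 * g ≤ t := by linarith
  clear_value t g s H
  clear htdef hgdef hsdef hHdef hg2 hs2
  refine ⟨?_, ?_, ?_, ?_, ?_, ?_, ?_, ?_, ?_⟩
  · -- H ≤ g
    nlinarith [hH, ht, mul_nonneg (sub_nonneg.2 h2g) hg0.le]
  · -- g ≤ (2H + s)/3
    nlinarith [key2, hH, ht]
  · -- (2H+s)/3 ≤ (t/2 + H)/2
    nlinarith [key36, hH, ht]
  · -- (t/2 + H)/2 ≤ (s+g)/2
    nlinarith [key47, hH, ht, htt]
  · -- (s+g)/2 ≤ (H+2s)/3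
    nlinarith [key2, hH, ht]
  · -- (H+2s)/3 ≤ t/2
    nlinarith [key36, hH, ht]
  · -- t/2 ≤ s + H - g
    nlinarith [key7, hH, ht, htt]
  · -- s + H - g ≤ s
    nlinarith [hH, ht, mul_nonneg (sub_nonneg.2 h2g) hg0.le]
  · -- s ≤ 3(t/2 - g) + H
    nlinarith [key9, hH, ht, htt]
end

section
/- For all positive reals a, b: √((A(a,b)² + H(a,b)²)/2) ≤ (S(a,b) + G(a,b))/2. -/
theorem rms_ah_le (a b : ℝ) (ha : 0 < a) (hb : 0 < b) :
    Real.sqrt ((((a + b) / 2) ^ 2 + (2 * a * b / (a + b)) ^ 2) / 2) ≤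
      (Real.sqrt ((a ^ 2 + b ^ 2) / 2) + Real.sqrt (a * b)) / 2 := by
  set s := Real.sqrt ((a ^ 2 + b ^ 2) / 2) with hs
  set g := Real.sqrt (a * b) with hg
  have hab : 0 < a + b := by linarith
  have hs0 : 0 ≤ s := Real.sqrt_nonneg _
  have hg0 : 0 ≤ g := Real.sqrt_nonneg _
  have hs2 : s ^ 2 = (a ^ 2 + b ^ 2) / 2 := Real.sq_sqrt (by positivity)
  have hg2 : g ^ 2 = a * b := Real.sq_sqrt (by positivity)
  have hgs : g ≤ s := by
    rw [hs, hg]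
    exact Real.sqrt_le_sqrt (by nlinarith [sq_nonneg (a - b)])
  have hH0 : 0 ≤ 2 * a * b / (a + b) := by positivity
  have hHg : 2 * a * b / (a + b) ≤ g := by
    rw [div_le_iff₀ hab]
    rw [hg, Real.sqrt_mul ha.le]
    nlinarith [sq_nonneg (Real.sqrt a - Real.sqrt b), Real.sq_sqrt ha.le,
      Real.sq_sqrt hb.le, Real.sqrt_nonneg a, Real.sqrt_nonneg b,
      mul_nonneg (Real.sqrt_nonneg a) (Real.sqrt_nonneg b),
      mul_nonneg (mul_nonneg (Real.sqrt_nonneg a) (Real.sqrt_nonneg b)) (sq_nonneg (Real.sqrt a - Real.sqrt b))]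
  calc Real.sqrt ((((a + b) / 2) ^ 2 + (2 * a * b / (a + b)) ^ 2) / 2)
      ≤ Real.sqrt (((s + g) / 2) ^ 2) := by
        apply Real.sqrt_le_sqrt
        nlinarith [mul_le_mul hHg hHg hH0 hg0, mul_le_mul_of_nonneg_left hgs hg0]
    _ = (s + g) / 2 := Real.sqrt_sq (by positivity)
end

section
/- For all positive reals a, b: (1/8)(A(a,b) − H(a,b)) ≤ N2(a,b) − N1(a,b), where N1(a,b) = ((√a+√b)/2)² and N2(a,b) = ((√a+√b)/2)·√((a+b)/2). -/
theorem mah_le_eight (a b : ℝ) (ha : 0 < a) (hb : 0 < b) :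
    (1/8) * ((a + b) / 2 - 2 * a * b / (a + b)) ≤
      ((Real.sqrt a + Real.sqrt b) / 2) * Real.sqrt ((a + b) / 2) -
        ((Real.sqrt a + Real.sqrt b) / 2) ^ 2 := by
  set x := Real.sqrt a with hxdef
  set y := Real.sqrt b with hydef
  set q := Real.sqrt ((a + b) / 2) with hqdef
  have hx : 0 < x := Real.sqrt_pos.mpr ha
  have hy : 0 < y := Real.sqrt_pos.mpr hb
  have hq : 0 < q := Real.sqrt_pos.mpr (by linarith)
  have hx2 : x ^ 2 = a := Real.sq_sqrt ha.le
  have hy2 : y ^ 2 = b := Real.sq_sqrt hb.le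
  have hq2 : q ^ 2 = (a + b) / 2 := Real.sq_sqrt (by linarith)
  have hab : 0 < a + b := by linarith
  have hqs : (x + y) / 2 ≤ q := by
    nlinarith [sq_nonneg (x - y), sq_nonneg (x + y - 2 * q)]
  have hq2pos : (0:ℝ) < 4 * q ^ 2 := by positivity
  have hDeq : (a + b) / 2 - 2 * a * b / (a + b) = (a - b) ^ 2 / (4 * q ^ 2) := by
    rw [hq2]
    field_simp
    ring
  rw [hDeq, ← mul_div_assoc, div_le_iff₀ hq2pos]
  have h1 : (a - b) ^ 2 ≤ 32 * q ^ 2 * ((x + y) / 2 * q - ((x + y) / 2) ^ 2) := by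
    nlinarith [mul_nonneg (mul_nonneg (by positivity : (0:ℝ) ≤ x + y)
        (sq_nonneg (q - (x + y) / 2))) (by positivity : (0:ℝ) ≤ 2 * q + (x + y) / 2),
      sq_nonneg (x - y), hqs, hq.le]
  linarith
end

section
/- For all positive reals a, b: N2(a,b) − N1(a,b) ≤ (1/3)(N2(a,b) − G(a,b)), equivalently 2N2(a,b) + G(a,b) ≤ 3N1(a,b). -/
theorem mn2n1_le (a b : ℝ) (ha : 0 < a) (hb : 0 < b) :
    ((Real.sqrt a + Real.sqrt b) / 2) * Real.sqrt ((a + b) / 2) -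
        ((Real.sqrt a + Real.sqrt b) / 2) ^ 2 ≤
      (1/3) * (((Real.sqrt a + Real.sqrt b) / 2) * Real.sqrt ((a + b) / 2) -
        Real.sqrt (a * b)) := by
  have hab : Real.sqrt (a * b) = Real.sqrt a * Real.sqrt b := Real.sqrt_mul ha.le b
  nlinarith [sq_nonneg ((Real.sqrt a + Real.sqrt b) / 2 - Real.sqrt ((a + b) / 2)),
    Real.sq_sqrt ha.le, Real.sq_sqrt hb.le,
    Real.sq_sqrt (show (0:ℝ) ≤ (a + b) / 2 by linarith),
    Real.sqrt_nonneg a, Real.sqrt_nonneg b]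
end

section
/- For all positive reals a, b: N2(a,b) − G(a,b) ≤ (3/4)(A(a,b) − G(a,b)) and (1/4)(A(a,b) − G(a,b)) ≤ A(a,b) − N2(a,b). -/
theorem mn2g_mag (a b : ℝ) (ha : 0 < a) (hb : 0 < b) :
    ((Real.sqrt a + Real.sqrt b) / 2) * Real.sqrt ((a + b) / 2) - Real.sqrt (a * b) ≤
      (3/4) * ((a + b) / 2 - Real.sqrt (a * b)) ∧
    (1/4) * ((a + b) / 2 - Real.sqrt (a * b)) ≤
      (a + b) / 2 - ((Real.sqrt a + Real.sqrt b) / 2) * Real.sqrt ((a + b) / 2) := by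
  have key : ((Real.sqrt a + Real.sqrt b) / 2) * Real.sqrt ((a + b) / 2) ≤
      (3/4) * ((a + b) / 2) + (1/4) * Real.sqrt (a * b) := by
    have h1 : ((Real.sqrt a + Real.sqrt b) / 2) * Real.sqrt ((a + b) / 2) ≤
        (((Real.sqrt a + Real.sqrt b) / 2)^2 + (Real.sqrt ((a + b) / 2))^2) / 2 := by
      nlinarith [sq_nonneg ((Real.sqrt a + Real.sqrt b) / 2 - Real.sqrt ((a + b) / 2))]
    have ha' : Real.sqrt a ^ 2 = a := Real.sq_sqrt ha.le
    have hb' : Real.sqrt b ^ 2 = b := Real.sq_sqrt hb.le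
    have hab : Real.sqrt a * Real.sqrt b = Real.sqrt (a * b) :=
      (Real.sqrt_mul ha.le b).symm
    have hs : (Real.sqrt ((a + b) / 2))^2 = (a + b) / 2 :=
      Real.sq_sqrt (by positivity)
    nlinarith [h1]
  constructor <;> nlinarith [key]
end

section
/- For all positive reals a, b: S(a,b) − A(a,b) ≤ (4/5)(S(a,b) − N2(a,b)) and (1/5)(S(a,b) − N2(a,b)) ≤ A(a,b) − N2(a,b), where S(a,b) = √((a²+b²)/2) and N2(a,b) = ((√a+√b)/2)·√((a+b)/2). -/
theorem msa_msn2 (a b : ℝ) (ha : 0 < a) (hb : 0 < b) :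
    Real.sqrt ((a ^ 2 + b ^ 2) / 2) - (a + b) / 2 ≤
      (4/5) * (Real.sqrt ((a ^ 2 + b ^ 2) / 2) -
        ((Real.sqrt a + Real.sqrt b) / 2) * Real.sqrt ((a + b) / 2)) ∧
    (1/5) * (Real.sqrt ((a ^ 2 + b ^ 2) / 2) -
        ((Real.sqrt a + Real.sqrt b) / 2) * Real.sqrt ((a + b) / 2)) ≤
      (a + b) / 2 - ((Real.sqrt a + Real.sqrt b) / 2) * Real.sqrt ((a + b) / 2) := by
  set x := Real.sqrt a with hxdef
  set y := Real.sqrt b with hydef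
  set s := Real.sqrt ((a ^ 2 + b ^ 2) / 2) with hsdef
  set t := Real.sqrt ((a + b) / 2) with htdef
  have hx : x ^ 2 = a := Real.sq_sqrt ha.le
  have hy : y ^ 2 = b := Real.sq_sqrt hb.le
  have hxpos : 0 < x := Real.sqrt_pos.mpr ha
  have hypos : 0 < y := Real.sqrt_pos.mpr hb
  have hs : s ^ 2 = (a ^ 2 + b ^ 2) / 2 := Real.sq_sqrt (by positivity)
  have ht : t ^ 2 = (a + b) / 2 := Real.sq_sqrt (by positivity)
  have hsnn : 0 ≤ s := Real.sqrt_nonneg _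
  have htnn : 0 ≤ t := Real.sqrt_nonneg _
  have hab : 0 < a + b := by linarith
  -- tangent bounds
  have h1 : (a + b) * s ≤ s ^ 2 + ((a + b) / 2) ^ 2 := by nlinarith [sq_nonneg (s - (a + b) / 2)]
  have h2 : (x + y) * t ≤ t ^ 2 + ((x + y) / 2) ^ 2 := by nlinarith [sq_nonneg (t - (x + y) / 2)]
  have key : s + 4 * ((x + y) / 2) * t ≤ 5 * ((a + b) / 2) := by
    have hmul : (a + b) * (s + 4 * ((x + y) / 2) * t) ≤ (a + b) * (5 * ((a + b) / 2)) := by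
      nlinarith [sq_nonneg ((x - y) ^ 2), mul_le_mul_of_nonneg_left h2 hab.le, sq_nonneg (x - y), sq_nonneg (x + y)]
    exact le_of_mul_le_mul_left hmul hab
  constructor <;> linarith
end

section
/- For all positive reals a, b: S(a,b) − H(a,b) ≤ 2(S(a,b) − N1(a,b)) and S(a,b) − N1(a,b) ≤ (3/4)(S(a,b) − G(a,b)), where S(a,b) = √((a²+b²)/2), H(a,b) = 2ab/(a+b), N1(a,b) = ((√a+√b)/2)², G(a,b) = √(ab). -/
/-!
With `A = (a + b) / 2` and `G = √(ab)` all four means are functions of `A` and `G`: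
`S = √(2A² - G²)`, `H = G² / A`, `N₁ = (A + G) / 2`. The two inequalities become
`A + G - G² / A ≤ S` and `S ≤ 2A - G`, and for `0 ≤ G ≤ A` these follow from
`(2A - G)² - S² = 2(A - G)²` and `A²S² - (A² + AG - G²)² = (A - G)³(A + G)`.
-/

namespace Real

lemma sqrt_two_mul_sq_sub_sq_le {m g : ℝ} (hg : 0 ≤ g) (hgm : g ≤ m) :
    √(2 * m ^ 2 - g ^ 2) ≤ 2 * m - g :=
  sqrt_le_iff.mpr ⟨by linarith, by nlinarith [sq_nonneg (m - g)]⟩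

lemma add_sub_sq_div_le_sqrt_two_mul_sq_sub_sq {m g : ℝ} (hm : 0 < m) (hg : 0 ≤ g)
    (hgm : g ≤ m) : m + g - g ^ 2 / m ≤ √(2 * m ^ 2 - g ^ 2) := by
  have key : 2 * m ^ 2 - g ^ 2 - (m + g - g ^ 2 / m) ^ 2 = (m - g) ^ 3 * (m + g) / m ^ 2 := by
    field_simp
    ring
  have hsq : (m + g - g ^ 2 / m) ^ 2 ≤ 2 * m ^ 2 - g ^ 2 := by
    have : 0 ≤ (m - g) ^ 3 * (m + g) / m ^ 2 := by
      have : 0 ≤ m - g := sub_nonneg.mpr hgm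
      positivity
    linarith
  exact (le_abs_self _).trans (abs_le_sqrt hsq)

end Real

theorem msh_msn1 (a b : ℝ) (ha : 0 < a) (hb : 0 < b) :
    Real.sqrt ((a ^ 2 + b ^ 2) / 2) - 2 * a * b / (a + b) ≤
      2 * (Real.sqrt ((a ^ 2 + b ^ 2) / 2) - ((Real.sqrt a + Real.sqrt b) / 2) ^ 2) ∧
    Real.sqrt ((a ^ 2 + b ^ 2) / 2) - ((Real.sqrt a + Real.sqrt b) / 2) ^ 2 ≤
      (3/4) * (Real.sqrt ((a ^ 2 + b ^ 2) / 2) - Real.sqrt (a * b)) := by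
  set m := (a + b) / 2 with hm_def
  have hm : 0 < m := by positivity
  have hG : √(a * b) = √a * √b := Real.sqrt_mul ha.le b
  have hgm : √a * √b ≤ m := by
    nlinarith [sq_nonneg (√a - √b), Real.sq_sqrt ha.le, Real.sq_sqrt hb.le, hm_def]
  have hS : (a ^ 2 + b ^ 2) / 2 = 2 * m ^ 2 - (√a * √b) ^ 2 := by
    rw [mul_pow, Real.sq_sqrt ha.le, Real.sq_sqrt hb.le]
    ring
  have hH : 2 * a * b / (a + b) = (√a * √b) ^ 2 / m := by
    rw [mul_pow, Real.sq_sqrt ha.le, Real.sq_sqrt hb.le, hm_def]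
    field_simp
  have hN : ((√a + √b) / 2) ^ 2 = (m + √a * √b) / 2 := by
    rw [div_pow, add_sq, Real.sq_sqrt ha.le, Real.sq_sqrt hb.le]
    ring
  have hlower := Real.add_sub_sq_div_le_sqrt_two_mul_sq_sub_sq hm (by positivity) hgm
  have hupper := Real.sqrt_two_mul_sq_sub_sq_le (by positivity) hgm
  rw [hS, hH, hN, hG]
  constructor <;> linarith
end
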